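/- Let k ≥ 3 and let G be a graph on n ≥ 2^{2k} vertices. Then either G contains no induced k-vertex subgraph with an even number of edges, or G contains at least C(n,k)/(2^{2k²+1} k² n²) induced k-vertex subgraphs with an even number of edges. -/

import Mathlib

open scoped Classical

/-- Number of edges of the subgraph of `G` induced by the vertex set `U`. -/
noncomputable def inducedEdges {V : Type*} (G : SimpleGraph V) (U : Finset V) : ℕ :=
  Nat.card {e : Sym2 V // e ∈ G.edgeSet ∧ ∀ v ∈ e, v ∈ U}

/-!
Fix an even `k`-set `S`. If every `(k-2)`-set avoiding `S` extends to an even `k`-set, double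
counting gives `C(n-k, k-2) ≤ C(k,2) · #even`. Otherwise some `(k-2)`-set `T` has only odd
two-point extensions. This pins down the graph outside `T`: `u ~ v` iff
`1 + e(T) + d_T(u) + d_T(v)` is odd, so the parity of a `k`-set outside `T` depends only on
`∑ d_T` mod 2. If `d_T` is constant outside `T`, all `k`-sets there are even (like `S`);
otherwise, completing a `(k-1)`-set with a vertex of the right degree parity yields
`C(n-k, k-1)` even `k`-sets. Either way `n^2 2^k k^2` times the number of even sets is at
least `C(n, k)`.
-/

open Finset

theorem Nat.four_mul_le_two_pow_two_mul (k : ℕ) : 4 * k ≤ 2 ^ (2 * k) := by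
  induction k with
  | zero => norm_num
  | succ m ih =>
    have := Nat.one_le_two_pow (n := 2 * m)
    rw [show 2 * (m + 1) = 2 * m + 2 by ring, pow_add]; omega

theorem Nat.choose_sub_two_le_choose_succ {n : ℕ} (hn : 1 ≤ n) (j : ℕ) :
    (n - 2).choose j ≤ n.choose (j + 1) := by
  obtain ⟨m, rfl⟩ := Nat.exists_eq_add_of_le' hn
  calc (m + 1 - 2).choose j ≤ m.choose j := Nat.choose_le_choose j (by omega)
    _ ≤ (m + 1).choose (j + 1) := by rw [Nat.choose_succ_succ']; omega

theorem Nat.choose_succ_le_mul_choose (n j : ℕ) : n.choose (j + 1) ≤ n * n.choose j := by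
  refine Nat.le_of_mul_le_mul_right (c := j + 1) ?_ j.succ_pos
  calc n.choose (j + 1) * (j + 1) = n.choose j * (n - j) := Nat.choose_succ_right_eq n j
    _ ≤ n.choose j * (n * (j + 1)) :=
        Nat.mul_le_mul_left _ ((Nat.sub_le n j).trans (Nat.le_mul_of_pos_right n j.succ_pos))
    _ = n * n.choose j * (j + 1) := by ring

theorem Nat.choose_le_pow_mul_choose_of_le {n q j c : ℕ} (h : n ≤ c * (q + 1 - j)) :
    n.choose j ≤ c ^ j * q.choose j := by
  refine Nat.le_of_mul_le_mul_left ?_ j.factorial_pos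
  calc j.factorial * n.choose j = n.descFactorial j :=
        (Nat.descFactorial_eq_factorial_mul_choose n j).symm
    _ ≤ n ^ j := Nat.descFactorial_le_pow n j
    _ ≤ c ^ j * (q + 1 - j) ^ j := by rw [← Nat.mul_pow]; exact Nat.pow_le_pow_left h j
    _ ≤ c ^ j * q.descFactorial j := Nat.mul_le_mul_left _ (q.pow_sub_le_descFactorial j)
    _ = j.factorial * (c ^ j * q.choose j) := by
      rw [Nat.descFactorial_eq_factorial_mul_choose]; ring

theorem Nat.choose_le_two_pow_mul_sq_mul_choose {n k : ℕ} (hk : 2 ≤ k) (hn : 4 * k ≤ n) :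
    n.choose k ≤ 2 ^ k * n ^ 2 * (n - k).choose (k - 2) := by
  obtain ⟨j, rfl⟩ := Nat.exists_eq_add_of_le' hk
  calc n.choose (j + 2) ≤ n * (n * n.choose j) := (n.choose_succ_le_mul_choose _).trans
        (Nat.mul_le_mul_left _ (n.choose_succ_le_mul_choose j))
    _ ≤ n * (n * (2 ^ j * (n - (j + 2)).choose j)) := by
        gcongr; exact Nat.choose_le_pow_mul_choose_of_le (by omega)
    _ = 2 ^ j * n ^ 2 * (n - (j + 2)).choose j := by ring
    _ ≤ 2 ^ (j + 2) * n ^ 2 * (n - (j + 2)).choose (j + 2 - 2) := by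
        rw [Nat.add_sub_cancel]; gcongr <;> omega

/-- Completing a `j`-subset `B` of `s \ {o, e}` by `o` or by `e` reaches the sum `τ`. -/
theorem Finset.choose_le_card_filter_sum_eq_of_ne {α : Type*} [DecidableEq α] {s : Finset α}
    (f : α → ZMod 2) {o e : α} (ho : o ∈ s) (he : e ∈ s) (hoe : f o ≠ f e) (j : ℕ)
    (τ : ZMod 2) : (#s - 2).choose j ≤ #{W ∈ s.powersetCard (j + 1) | ∑ u ∈ W, f u = τ} := by
  have hsplit : ∀ a b x t : ZMod 2, a ≠ b → x + a ≠ t → x + b = t := by decide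
  set pick : Finset α → α := fun B => if ∑ u ∈ B, f u + f o = τ then o else e
  have hpick : ∀ B, pick B ∈ ({o, e} : Finset α) := fun B => by
    by_cases h : ∑ u ∈ B, f u + f o = τ <;> simp [pick, h]
  have hpick_sum : ∀ B, ∑ u ∈ B, f u + f (pick B) = τ := fun B => by
    by_cases h : ∑ u ∈ B, f u + f o = τ
    · simp only [pick, if_pos h, h]
    · simp only [pick, if_neg h, hsplit _ _ _ _ hoe h]
  have hpair : ({o, e} : Finset α) ⊆ s := insert_subset ho (singleton_subset_iff.mpr he)
  have hcard_pair : #({o, e} : Finset α) = 2 := card_pair fun h => hoe (h ▸ rfl)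
  have herase : ∀ {B : Finset α}, B ∈ (s \ {o, e}).powersetCard j →
      insert (pick B) B \ {o, e} = B := fun hB =>
    (insert_sdiff_of_mem _ (hpick _)).trans (sdiff_eq_self_of_disjoint
      (disjoint_left.mpr fun x hx => (mem_sdiff.mp ((mem_powersetCard.mp hB).1 hx)).2))
  have hmaps : ∀ B ∈ (s \ {o, e}).powersetCard j,
      insert (pick B) B ∈ {W ∈ s.powersetCard (j + 1) | ∑ u ∈ W, f u = τ} := fun B hB => by
    obtain ⟨hBs, hBj⟩ := mem_powersetCard.mp hB
    have hnot : pick B ∉ B := fun h => (mem_sdiff.mp (hBs h)).2 (hpick B)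
    simp only [mem_filter, mem_powersetCard, sum_insert hnot, card_insert_of_notMem hnot,
      hBj, insert_subset_iff, and_true]
    exact ⟨⟨hpair (hpick B), hBs.trans sdiff_subset⟩, by rw [add_comm]; exact hpick_sum B⟩
  calc (#s - 2).choose j = #((s \ {o, e}).powersetCard j) := by
        rw [card_powersetCard, card_sdiff_of_subset hpair, hcard_pair]
    _ ≤ _ := card_le_card_of_injOn _ hmaps
        fun B hB B' hB' h => herase hB ▸ herase hB' ▸ congrArg (· \ {o, e}) h

theorem Finset.choose_le_card_filter_sum_eq {α : Type*} [DecidableEq α] {s W₀ : Finset α}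
    (f : α → ZMod 2) {j : ℕ} (hW₀ : W₀ ⊆ s) (hcard : #W₀ = j + 1) :
    (#s - 2).choose j ≤ #{W ∈ s.powersetCard (j + 1) | ∑ u ∈ W, f u = ∑ u ∈ W₀, f u} := by
  by_cases hconst : ∃ o ∈ s, ∃ e ∈ s, f o ≠ f e
  · obtain ⟨o, ho, e, he, hoe⟩ := hconst
    exact choose_le_card_filter_sum_eq_of_ne f ho he hoe j _
  push Not at hconst
  obtain ⟨x₀, hx₀⟩ : W₀.Nonempty := card_pos.mp (by omega)
  have hsum : ∀ W ⊆ s, ∑ u ∈ W, f u = #W • f x₀ := fun W hW =>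
    sum_const (f x₀) ▸ sum_congr rfl fun u hu => hconst u (hW hu) x₀ (hW₀ hx₀)
  rw [filter_true_of_mem fun W hW => by
    rw [mem_powersetCard] at hW
    rw [hsum W hW.1, hsum W₀ hW₀, hW.2, hcard], card_powersetCard]
  exact Nat.choose_sub_two_le_choose_succ (by have := card_le_card hW₀; omega) j

namespace SimpleGraph

variable {V : Type*} (G : SimpleGraph V)

theorem inducedEdges_eq_card_filter_sym2 (U : Finset V) :
    inducedEdges G U = #{e ∈ U.sym2 | e ∈ G.edgeSet} := by
  rw [inducedEdges, ← Nat.card_eq_finsetCard]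
  exact Nat.card_congr (Equiv.subtypeEquivRight fun e => by simp [and_comm])

theorem inducedEdges_insert [DecidableEq V] {v : V} {U : Finset V} (hv : v ∉ U) :
    inducedEdges G (insert v U) = inducedEdges G U + #{u ∈ U | G.Adj v u} := by
  rw [inducedEdges_eq_card_filter_sym2, inducedEdges_eq_card_filter_sym2, ← cons_eq_insert _ _ hv,
    sym2_cons, filter_disjUnion, card_disjUnion, add_comm, filter_map, card_map]
  congr 2
  ext u
  simp only [mem_filter, mem_cons, Function.comp_apply, Sym2.mkEmbedding_apply, mem_edgeSet]
  constructor
  · rintro ⟨rfl | hu, hadj⟩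
    · exact absurd hadj G.irrefl
    · exact ⟨hu, hadj⟩
  · exact fun ⟨hu, hadj⟩ => ⟨Or.inr hu, hadj⟩

noncomputable def evenSets [Fintype V] (k : ℕ) : Finset (Finset V) :=
  {W ∈ powersetCard k univ | Even (inducedEdges G W)}

theorem natCard_eq_card_evenSets [Fintype V] (k : ℕ) :
    Nat.card {W : Finset V // W.card = k ∧ Even (inducedEdges G W)} = #(G.evenSets k) := by
  rw [evenSets, ← Nat.card_eq_finsetCard]
  exact Nat.card_congr (Equiv.subtypeEquivRight fun W => by simp)

noncomputable def degParity (T : Finset V) (u : V) : ZMod 2 := #{v ∈ T | G.Adj u v}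

def OddExtensions [DecidableEq V] (T : Finset V) : Prop :=
  ∀ ⦃u v : V⦄, u ∉ T → v ∉ T → u ≠ v → Odd (inducedEdges G (insert u (insert v T)))

variable {G} [DecidableEq V] {T : Finset V}

theorem oddExtensions_of_forall_not_even
    (hT : ∀ W, T ⊆ W → #W = #T + 2 → ¬Even (inducedEdges G W)) : G.OddExtensions T := by
  intro u v hu hv huv
  have hu' : u ∉ insert v T := by simp [huv, hu]
  refine Nat.not_even_iff_odd.mp (hT _ ((subset_insert v T).trans (subset_insert u _)) ?_)
  rw [card_insert_of_notMem hu', card_insert_of_notMem hv]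

theorem OddExtensions.adj_eq (hT : G.OddExtensions T) {u v : V} (hu : u ∉ T) (hv : v ∉ T)
    (huv : u ≠ v) :
    (if G.Adj u v then 1 else 0 : ZMod 2)
      = 1 + inducedEdges G T + G.degParity T u + G.degParity T v := by
  have hu' : u ∉ insert v T := by simp [huv, hu]
  have hodd := ZMod.natCast_eq_one_iff_odd.mpr (hT hu hv huv)
  rw [inducedEdges_insert G hu', inducedEdges_insert G hv] at hodd
  push_cast [natCast_card_filter, sum_insert hv] at hodd
  simp only [degParity, natCast_card_filter]
  grind

/-- `OddExtensions.adj_eq` summed over the pairs of `S`; the factor `#S + 1` is `#S - 1` mod 2. -/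
theorem OddExtensions.inducedEdges_cast (hT : G.OddExtensions T) {S : Finset V}
    (hS : Disjoint S T) :
    (inducedEdges G S : ZMod 2) = (#S).choose 2 * (1 + inducedEdges G T)
      + (#S + 1) * ∑ u ∈ S, G.degParity T u := by
  induction S using Finset.induction_on with
  | empty => simp [inducedEdges_eq_card_filter_sym2]
  | @insert a S ha ih =>
    have haT : a ∉ T := Finset.disjoint_left.mp hS (mem_insert_self a S)
    have hST : Disjoint S T := hS.mono_left (subset_insert a S)
    have hadj : ∀ v ∈ S, (if G.Adj a v then 1 else 0 : ZMod 2)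
        = (1 + inducedEdges G T + G.degParity T a) + G.degParity T v := fun v hv =>
      hT.adj_eq haT (Finset.disjoint_left.mp hST hv) (ne_of_mem_of_not_mem hv ha).symm
    rw [inducedEdges_insert G ha, Nat.cast_add, ih hST, natCast_card_filter, sum_congr rfl hadj,
      sum_add_distrib, sum_const, card_insert_of_notMem ha, sum_insert ha, Nat.choose_succ_succ',
      Nat.choose_one_right, nsmul_eq_mul]
    push_cast
    ring_nf
    reduce_mod_char

theorem OddExtensions.inducedEdges_cast_eq_of_sum_eq (hT : G.OddExtensions T) {S W : Finset V}
    (hS : Disjoint S T) (hW : Disjoint W T) (hcard : #W = #S)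
    (hsum : ∑ u ∈ W, G.degParity T u = ∑ u ∈ S, G.degParity T u) :
    (inducedEdges G W : ZMod 2) = inducedEdges G S := by
  rw [hT.inducedEdges_cast hS, hT.inducedEdges_cast hW, hcard, hsum]

section Fintype

variable [Fintype V]

theorem OddExtensions.choose_le_card_evenSets (hT : G.OddExtensions T) {k : ℕ} (hTk : #T + 2 = k)
    {S : Finset V} (hST : Disjoint S T) (hS : #S = k) (hSeven : Even (inducedEdges G S)) :
    (Fintype.card V - k).choose (k - 1) ≤ #(G.evenSets k) := by
  have hk : k - 1 + 1 = k := by omega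
  calc (Fintype.card V - k).choose (k - 1) = (#Tᶜ - 2).choose (k - 1) := by
        rw [card_compl]; congr 1; omega
    _ ≤ #{W ∈ Tᶜ.powersetCard (k - 1 + 1) |
          ∑ u ∈ W, G.degParity T u = ∑ u ∈ S, G.degParity T u} :=
        choose_le_card_filter_sum_eq _ (subset_compl_iff_disjoint_right.mpr hST) (by omega)
    _ ≤ #(G.evenSets k) := by
        refine card_le_card fun W hW => ?_
        rw [hk, mem_filter, mem_powersetCard, subset_compl_iff_disjoint_right] at hW
        obtain ⟨⟨hWT, hWk⟩, hsum⟩ := hW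
        refine mem_filter.mpr ⟨mem_powersetCard.mpr ⟨subset_univ W, hWk⟩, ?_⟩
        rw [← ZMod.natCast_eq_zero_iff_even] at hSeven ⊢
        rw [hT.inducedEdges_cast_eq_of_sum_eq hST hWT (hWk.trans hS.symm) hsum, hSeven]

theorem choose_le_choose_two_mul_card_evenSets {k : ℕ} (hk : 2 ≤ k)
    (hn : 3 * k ≤ Fintype.card V) {S : Finset V} (hS : #S = k)
    (hSeven : Even (inducedEdges G S)) :
    (Fintype.card V - k).choose (k - 2) ≤ k.choose 2 * #(G.evenSets k) := by
  set covered := (G.evenSets k).biUnion (powersetCard (k - 2))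
  by_cases hcov : Sᶜ.powersetCard (k - 2) ⊆ covered
  · calc (Fintype.card V - k).choose (k - 2) ≤ #covered := by
          simpa [card_compl, hS] using card_le_card hcov
      _ ≤ #(G.evenSets k) * k.choose (k - 2) :=
          card_biUnion_le_card_mul _ _ _ fun W hW => by
            rw [card_powersetCard, (mem_powersetCard.mp (mem_filter.mp hW).1).2]
      _ = k.choose 2 * #(G.evenSets k) := by rw [Nat.choose_symm hk, mul_comm]
  · obtain ⟨T, hT, hTcov⟩ := not_subset.mp hcov
    rw [mem_powersetCard, subset_compl_iff_disjoint_left] at hT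
    have hodd : G.OddExtensions T := oddExtensions_of_forall_not_even fun W hTW hW hWeven =>
      hTcov (mem_biUnion.mpr ⟨W, mem_filter.mpr ⟨mem_powersetCard.mpr ⟨subset_univ W, by omega⟩,
        hWeven⟩, mem_powersetCard.mpr ⟨hTW, hT.2⟩⟩)
    calc (Fintype.card V - k).choose (k - 2) ≤ (Fintype.card V - k).choose (k - 2 + 1) :=
          Nat.choose_le_succ_of_lt_half_left (by omega)
      _ ≤ #(G.evenSets k) :=
          (by omega : k - 2 + 1 = k - 1) ▸ hodd.choose_le_card_evenSets (by omega) hT.1 hS hSeven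
      _ ≤ k.choose 2 * #(G.evenSets k) :=
          Nat.le_mul_of_pos_left _ (Nat.choose_pos hk)

end Fintype

end SimpleGraph

theorem stmt_9 {V : Type*} [Fintype V] [DecidableEq V] (G : SimpleGraph V) (k : ℕ)
    (hk : 3 ≤ k) (hn : 2 ^ (2 * k) ≤ Fintype.card V) :
    Nat.card {W : Finset V // W.card = k ∧ Even (inducedEdges G W)} = 0 ∨
      ((Fintype.card V).choose k : ℝ) /
          ((2 : ℝ) ^ (2 * k ^ 2 + 1) * (k : ℝ) ^ 2 * (Fintype.card V : ℝ) ^ 2) ≤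
        (Nat.card {W : Finset V // W.card = k ∧ Even (inducedEdges G W)} : ℝ) := by
  rw [G.natCard_eq_card_evenSets k, card_eq_zero, ← not_nonempty_iff_eq_empty]
  refine or_iff_not_imp_left.mpr fun hne => ?_
  obtain ⟨S, hS⟩ := not_not.mp hne
  obtain ⟨hSk, hSeven⟩ := mem_filter.mp hS
  set n := Fintype.card V
  have hkn : 4 * k ≤ n := (Nat.four_mul_le_two_pow_two_mul k).trans hn
  have hcount : n.choose k ≤ 2 ^ k * n ^ 2 * (k ^ 2 * #(G.evenSets k)) := calc
    n.choose k ≤ 2 ^ k * n ^ 2 * (n - k).choose (k - 2) :=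
        Nat.choose_le_two_pow_mul_sq_mul_choose (by omega) hkn
    _ ≤ 2 ^ k * n ^ 2 * (k.choose 2 * #(G.evenSets k)) := Nat.mul_le_mul_left _
        (G.choose_le_choose_two_mul_card_evenSets (by omega) (by omega)
          (mem_powersetCard.mp hSk).2 hSeven)
    _ ≤ 2 ^ k * n ^ 2 * (k ^ 2 * #(G.evenSets k)) := by gcongr; exact Nat.choose_le_pow k 2
  have hpow : (2 : ℝ) ^ k ≤ 2 ^ (2 * k ^ 2 + 1) := pow_le_pow_right₀ one_le_two (by nlinarith)
  have hn0 : (0 : ℝ) < n := by exact_mod_cast (show 0 < n by omega)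
  rw [div_le_iff₀ (by positivity)]
  calc (n.choose k : ℝ) ≤ 2 ^ k * n ^ 2 * (k ^ 2 * #(G.evenSets k)) := by exact_mod_cast hcount
    _ ≤ 2 ^ (2 * k ^ 2 + 1) * n ^ 2 * (k ^ 2 * #(G.evenSets k)) := by gcongr
    _ = _ := by ring
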